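/- Monotonicity of the BatchBALD set function: for ω a discrete random variable and A ⊆ B finite sets of discrete random variables that are mutually conditionally independent given ω, I(A ; ω) ≤ I(B ; ω). -/

import Mathlib

open scoped BigOperators Classical

/-- Probability that the discrete random variable `X` takes value `a`,
under weight function `p` on a finite sample space. -/
noncomputable def pr {Ω α : Type*} [Fintype Ω] (p : Ω → ℝ) (X : Ω → α) (a : α) : ℝ :=
  ∑ s : Ω, if X s = a then p s else 0

/-- Shannon entropy of a discrete random variable. -/
noncomputable def ent {Ω α : Type*} [Fintype Ω] [Fintype α] (p : Ω → ℝ) (X : Ω → α) : ℝ :=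
  ∑ a : α, Real.negMulLog (pr p X a)

/-- Conditional Shannon entropy `H(X | Y) = ∑_b P(Y=b) H(X | Y=b)`. -/
noncomputable def condEnt {Ω α β : Type*} [Fintype Ω] [Fintype α] [Fintype β]
    (p : Ω → ℝ) (X : Ω → α) (Y : Ω → β) : ℝ :=
  ∑ b : β, ∑ a : α,
    pr p Y b * Real.negMulLog (pr p (fun s => (X s, Y s)) (a, b) / pr p Y b)

/-- Mutual information `I(X ; Y) = H(X) − H(X | Y)`. -/
noncomputable def mi {Ω α β : Type*} [Fintype Ω] [Fintype α] [Fintype β]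
    (p : Ω → ℝ) (X : Ω → α) (Y : Ω → β) : ℝ :=
  ent p X - condEnt p X Y

/-- Conditional mutual information `I(X ; Y | Z) = H(X | Z) − H(X | Z, Y)`. -/
noncomputable def cmi {Ω α β γ : Type*} [Fintype Ω] [Fintype α] [Fintype β] [Fintype γ]
    (p : Ω → ℝ) (X : Ω → α) (Y : Ω → β) (Z : Ω → γ) : ℝ :=
  condEnt p X Z - condEnt p X (fun s => (Z s, Y s))

/-- The joint random variable of a family of random variables. -/
def jointFam {Ω ι α : Type*} (y : ι → Ω → α) : Ω → (ι → α) := fun s i => y i s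

/-- The joint random variable of the sub-family indexed by a finite set `A`. -/
def jointSet {Ω ι α : Type*} (y : ι → Ω → α) (A : Finset ι) : Ω → (A → α) :=
  fun s i => y i.1 s

/-- The family `y` is mutually conditionally independent given `w`:
the conditional joint distribution factorizes. -/
def CondIndepFam {Ω ι α γ : Type*} [Fintype Ω] [Fintype ι] (p : Ω → ℝ)
    (y : ι → Ω → α) (w : Ω → γ) : Prop :=
  ∀ c : γ, 0 < pr p w c → ∀ a : ι → α,
    pr p (fun s => (jointFam y s, w s)) (a, c) / pr p w c
      = ∏ i : ι, pr p (fun s => (y i s, w s)) (a i, c) / pr p w c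

/-!
The joint variable of `A` is a function of that of `B` (restriction of coordinates), so this is
the data-processing inequality `I(f(X) ; ω) ≤ I(X ; ω)`. Writing
`I(X ; ω) = H(ω) + ∑_{x,c} P(x,c) (log P(x,c) - log P(x))`, merging the values of `X` along
the fibres of `f` can only decrease the sum, by the log-sum inequality.
-/

open Real

-- `log x ≥ 1 - x⁻¹` at `x = a / (t b)`.
lemma Real.mul_log_add_sub_le_mul_log_sub_log {a b t : ℝ} (ha : 0 ≤ a) (hb : 0 ≤ b)
    (hab : b = 0 → a = 0) (ht : 0 < t) :
    a * log t + a - t * b ≤ a * (log a - log b) := by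
  rcases ha.eq_or_lt with rfl | ha
  · simp only [zero_mul, add_zero, zero_sub, neg_nonpos]
    positivity
  have hb : 0 < b := hb.lt_of_ne fun h => ha.ne' (hab h.symm)
  have key := one_sub_inv_le_log_of_pos (show 0 < a / (t * b) by positivity)
  rw [log_div ha.ne' (by positivity), log_mul ht.ne' hb.ne', inv_div] at key
  have hlin : a * (1 - t * b / a) = a - t * b := by field_simp
  linarith [mul_le_mul_of_nonneg_left key ha.le]

lemma Real.sum_mul_log_sub_log_le {ι : Type*} (s : Finset ι) (a b : ι → ℝ)
    (ha : ∀ i ∈ s, 0 ≤ a i) (hb : ∀ i ∈ s, 0 ≤ b i)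
    (hab : ∀ i ∈ s, b i = 0 → a i = 0) :
    (∑ i ∈ s, a i) * (log (∑ i ∈ s, a i) - log (∑ i ∈ s, b i))
      ≤ ∑ i ∈ s, a i * (log (a i) - log (b i)) := by
  set A := ∑ i ∈ s, a i
  set B := ∑ i ∈ s, b i
  rcases (Finset.sum_nonneg ha).eq_or_lt with hA | hA
  · have hzero : ∀ i ∈ s, a i = 0 := (Finset.sum_eq_zero_iff_of_nonneg ha).1 hA.symm
    rw [show A = 0 from hA.symm, zero_mul,
      Finset.sum_eq_zero fun i hi => by rw [hzero i hi, zero_mul]]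
  have hB : 0 < B := by
    refine (Finset.sum_nonneg hb).lt_of_ne fun hB => hA.ne' ?_
    have hzero := (Finset.sum_eq_zero_iff_of_nonneg hb).1 hB.symm
    exact Finset.sum_eq_zero fun i hi => hab i hi (hzero i hi)
  calc A * (log A - log B) = ∑ i ∈ s, (a i * log (A / B) + a i - A / B * b i) := by
        rw [Finset.sum_sub_distrib, Finset.sum_add_distrib, ← Finset.sum_mul, ← Finset.mul_sum,
          log_div hA.ne' hB.ne']
        field_simp
        ring
    _ ≤ ∑ i ∈ s, a i * (log (a i) - log (b i)) :=
        Finset.sum_le_sum fun i hi =>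
          mul_log_add_sub_le_mul_log_sub_log (ha i hi) (hb i hi) (hab i hi) (by positivity)

section Marginals

variable {Ω α β γ : Type*} [Fintype Ω] (p : Ω → ℝ)

lemma pr_nonneg (hp : ∀ s, 0 ≤ p s) (X : Ω → β) (b : β) : 0 ≤ pr p X b :=
  Finset.sum_nonneg fun s _ => by split <;> simp [hp s]

lemma pr_comp [Fintype α] (f : α → β) (X : Ω → α) (b : β) :
    pr p (fun s => f (X s)) b = ∑ a with f a = b, pr p X a := by
  unfold pr
  rw [Finset.sum_comm]
  refine Finset.sum_congr rfl fun s _ => ?_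
  rw [Finset.sum_ite_eq]
  simp

lemma pr_pair_comp [Fintype α] (f : α → β) (X : Ω → α) (w : Ω → γ) (b : β) (c : γ) :
    pr p (fun s => (f (X s), w s)) (b, c)
      = ∑ a with f a = b, pr p (fun s => (X s, w s)) (a, c) := by
  unfold pr
  rw [Finset.sum_comm]
  refine Finset.sum_congr rfl fun s _ => ?_
  simp [Prod.ext_iff, ite_and, Finset.sum_ite_eq]

lemma pr_eq_sum_pair_left [Fintype γ] (X : Ω → α) (w : Ω → γ) (a : α) :
    pr p X a = ∑ c, pr p (fun s => (X s, w s)) (a, c) := by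
  unfold pr
  rw [Finset.sum_comm]
  refine Finset.sum_congr rfl fun s _ => ?_
  simp [Prod.ext_iff, ite_and, Finset.sum_ite_eq]

lemma pr_eq_sum_pair_right [Fintype α] (X : Ω → α) (w : Ω → γ) (c : γ) :
    pr p w c = ∑ a, pr p (fun s => (X s, w s)) (a, c) := by
  unfold pr
  rw [Finset.sum_comm]
  refine Finset.sum_congr rfl fun s _ => ?_
  simp [Prod.ext_iff, ite_and]

lemma pr_pair_le_left [Fintype γ] (hp : ∀ s, 0 ≤ p s) (X : Ω → α) (w : Ω → γ)
    (a : α) (c : γ) :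
    pr p (fun s => (X s, w s)) (a, c) ≤ pr p X a := by
  rw [pr_eq_sum_pair_left p X w a]
  exact Finset.single_le_sum (f := fun c => pr p (fun s => (X s, w s)) (a, c))
    (fun c _ => pr_nonneg p hp _ _) (Finset.mem_univ c)

lemma pr_pair_le_right [Fintype α] (hp : ∀ s, 0 ≤ p s) (X : Ω → α) (w : Ω → γ)
    (a : α) (c : γ) :
    pr p (fun s => (X s, w s)) (a, c) ≤ pr p w c := by
  rw [pr_eq_sum_pair_right p X w c]
  exact Finset.single_le_sum (f := fun a => pr p (fun s => (X s, w s)) (a, c))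
    (fun a _ => pr_nonneg p hp _ _) (Finset.mem_univ a)

end Marginals

section MutualInformation

variable {Ω α β γ : Type*} [Fintype Ω] [Fintype α] [Fintype β] [Fintype γ] (p : Ω → ℝ)

lemma ent_eq_neg_sum_pair_left (X : Ω → α) (w : Ω → γ) :
    ent p X = -∑ c, ∑ a, pr p (fun s => (X s, w s)) (a, c) * log (pr p X a) := by
  rw [Finset.sum_comm, ← Finset.sum_neg_distrib]
  refine Finset.sum_congr rfl fun a _ => ?_
  rw [negMulLog, ← Finset.sum_mul, ← pr_eq_sum_pair_left p X w a, neg_mul]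

lemma condEnt_eq_sum_pair (hp : ∀ s, 0 ≤ p s) (X : Ω → α) (w : Ω → γ) :
    condEnt p X w = ∑ c, ∑ a, pr p (fun s => (X s, w s)) (a, c)
      * (log (pr p w c) - log (pr p (fun s => (X s, w s)) (a, c))) := by
  refine Finset.sum_congr rfl fun c _ => Finset.sum_congr rfl fun a _ => ?_
  have hJ := pr_nonneg p hp (fun s => (X s, w s)) (a, c)
  have hJq := pr_pair_le_right p hp X w a c
  rcases hJ.eq_or_lt with hJ0 | hJpos
  · simp [← hJ0]
  have hq := hJpos.trans_le hJq
  rw [negMulLog, log_div hJpos.ne' hq.ne']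
  field_simp
  ring

lemma ent_eq_neg_sum_pair_right (X : Ω → α) (w : Ω → γ) :
    ent p w = -∑ c, ∑ a, pr p (fun s => (X s, w s)) (a, c) * log (pr p w c) := by
  simp only [ent, negMulLog, ← Finset.sum_mul, ← pr_eq_sum_pair_right p X w, neg_mul,
    Finset.sum_neg_distrib]

lemma mi_eq_ent_add_sum_pair (hp : ∀ s, 0 ≤ p s) (X : Ω → α) (w : Ω → γ) :
    mi p X w = ent p w + ∑ c, ∑ a, pr p (fun s => (X s, w s)) (a, c)
      * (log (pr p (fun s => (X s, w s)) (a, c)) - log (pr p X a)) := by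
  rw [mi, ent_eq_neg_sum_pair_left p X w, condEnt_eq_sum_pair p hp X w,
    ent_eq_neg_sum_pair_right p X w]
  simp only [← Finset.sum_sub_distrib, ← Finset.sum_add_distrib, ← Finset.sum_neg_distrib]
  refine Finset.sum_congr rfl fun c _ => Finset.sum_congr rfl fun a _ => by ring

theorem mi_comp_le (hp : ∀ s, 0 ≤ p s) (f : α → β) (X : Ω → α) (w : Ω → γ) :
    mi p (fun s => f (X s)) w ≤ mi p X w := by
  rw [mi_eq_ent_add_sum_pair p hp, mi_eq_ent_add_sum_pair p hp X]
  gcongr with c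
  rw [← Finset.sum_fiberwise Finset.univ f]
  gcongr with b
  rw [pr_pair_comp, pr_comp]
  exact sum_mul_log_sub_log_le _ _ _ (fun a _ => pr_nonneg p hp _ _)
    (fun a _ => pr_nonneg p hp _ _)
    fun a _ h => le_antisymm (h ▸ pr_pair_le_left p hp X w a c) (pr_nonneg p hp _ _)

end MutualInformation

theorem stmt_8_general {Ω ι α γ : Type*} [Fintype Ω] [DecidableEq ι]
    [Fintype α] [Fintype γ]
    (p : Ω → ℝ) (hp : ∀ s, 0 ≤ p s)
    (y : ι → Ω → α) (w : Ω → γ)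
    (A B : Finset ι) (hAB : A ⊆ B) :
    mi p (jointSet y A) w ≤ mi p (jointSet y B) w :=
  mi_comp_le p hp (fun (g : B → α) (i : A) => g ⟨i.1, hAB i.2⟩) (jointSet y B) w

/-- monotonicity of the BatchBALD set function:
`A ⊆ B → I(A ; ω) ≤ I(B ; ω)` for sets of variables that are mutually
conditionally independent given `ω`. -/
theorem stmt_8 {Ω ι α γ : Type*} [Fintype Ω] [Fintype ι] [DecidableEq ι]
    [Fintype α] [Fintype γ]
    (p : Ω → ℝ) (hp : ∀ s, 0 ≤ p s) (hsum : ∑ s, p s = 1)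
    (y : ι → Ω → α) (w : Ω → γ) (hind : CondIndepFam p y w)
    (A B : Finset ι) (hAB : A ⊆ B) :
    mi p (jointSet y A) w ≤ mi p (jointSet y B) w :=
  stmt_8_general p hp y w A B hAB
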